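/- Let X and Y be nonnegative random variables with pdfs f and g continuous and strictly positive on open intervals (their supports) and zero outside, with cdfs F and G, and let w₁, w₂ be nonnegative weight functions with ∫ w₁ f² dx < ∞ and ∫ w₂ g² dx < ∞. Fix n ≥ 1 and rank parameters a, b with 1 ≤ a, b ≤ n. Define Δ(u) = w₁(F^{-1}(u)) f(F^{-1}(u)) - w₂(G^{-1}(u)) g(G^{-1}(u)) for 0 ≤ u ≤ 1, A₁ = {u ∈ [0,1] : Δ(u) > 0}, and A₂ = {u ∈ [0,1] : Δ(u) < 0}. Suppose that for each rank i used in the PRSS scheme (i ∈ {a, b} if n is even, i ∈ {a, b, (n+1)/2} if n is odd), inf_{u ∈ A₁} φ_{2i-1:2n-1}(u) ≥ sup_{u ∈ A₂} φ_{2i-1:2n-1}(u). If J^{w₁}(X) ≤ J^{w₂}(Y), then J^{w₁}(X_PRSS^(n)) ≤ J^{w₂}(Y_PRSS^(n)). -/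

import Mathlib

open MeasureTheory Real Set

/-- The cdf associated with a pdf `f`. -/
noncomputable def cdfOf (f : ℝ → ℝ) (x : ℝ) : ℝ := ∫ t in Iic x, f t

/-- Quantile function `F⁻¹(u) = inf {x : F x ≥ u}`. -/
noncomputable def qf (F : ℝ → ℝ) (u : ℝ) : ℝ := sInf {x | u ≤ F x}

/-- pdf of the `i`-th order statistic of an i.i.d. sample of size `n` from pdf `f`, cdf `F`. -/
noncomputable def osPdf (f F : ℝ → ℝ) (i n : ℕ) (x : ℝ) : ℝ :=
  ((Nat.factorial n : ℝ) / ((Nat.factorial (i - 1) : ℝ) * (Nat.factorial (n - i) : ℝ))) *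
    F x ^ (i - 1) * (1 - F x) ^ (n - i) * f x

/-- `φ_{2i-1:2n-1}`, the pdf of a Beta(2i-1, 2n-2i+1) random variable. -/
noncomputable def betaPdf (i n : ℕ) (u : ℝ) : ℝ :=
  ((Nat.factorial (2 * n - 1) : ℝ) /
      ((Nat.factorial (2 * i - 2) : ℝ) * (Nat.factorial (2 * n - 2 * i) : ℝ))) *
    u ^ (2 * i - 2) * (1 - u) ^ (2 * n - 2 * i)

/-- The constant `C_{i,n}`. -/
noncomputable def Cin (i n : ℕ) : ℝ :=
  ((Nat.choose (2 * i - 2) (i - 1) : ℝ) * (Nat.choose (2 * n - 2 * i) (n - i) : ℝ)) /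
    (Nat.choose (2 * n - 1) (n - 1) : ℝ)

/-- General weighted extropy of the PRSS data with sample size `n` and rank parameters `a, b`. -/
noncomputable def Jprss (w f F : ℝ → ℝ) (n a b : ℕ) : ℝ :=
  if Even n then
    -(1 / 2) * (∫ x, w x * osPdf f F a n x ^ 2) ^ (n / 2) *
      (∫ x, w x * osPdf f F b n x ^ 2) ^ (n / 2)
  else
    -(1 / 2) * (∫ x, w x * osPdf f F a n x ^ 2) ^ ((n - 1) / 2) *
      (∫ x, w x * osPdf f F b n x ^ 2) ^ ((n - 1) / 2) *
      (∫ x, w x * osPdf f F ((n + 1) / 2) n x ^ 2)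

/-- pdf `ψ_{2i-1:2n}` of the (2i-1)-th order statistic of a standard exponential sample of size 2n. -/
noncomputable def expOsPdf (i n : ℕ) (x : ℝ) : ℝ :=
  ((Nat.factorial (2 * n) : ℝ) /
      ((Nat.factorial (2 * i - 2) : ℝ) * (Nat.factorial (2 * n - 2 * i + 1) : ℝ))) *
    (1 - Real.exp (-x)) ^ (2 * i - 2) * Real.exp (-(((2 * n - 2 * i + 2 : ℕ) : ℝ) * x))



/-- master substitution lemma -/
lemma cdf_subst (f w φ : ℝ → ℝ) (Sf : Set ℝ)
    (hSf : IsOpen Sf) (hSfconn : Sf.OrdConnected)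
    (hfc : ContinuousOn f Sf) (hfpos : ∀ x ∈ Sf, 0 < f x) (hfzero : ∀ x ∉ Sf, f x = 0)
    (hfint : Integrable f) (hfpdf : ∫ x, f x = 1)
    (hwnn : ∀ x, 0 ≤ w x)
    (hint : Integrable (fun x => w x * f x ^ 2))
    (hφ : Continuous φ) :
    (∫ u in Ioo (0:ℝ) 1, φ u * (w (qf (cdfOf f) u) * f (qf (cdfOf f) u))) =
        (∫ x, φ (cdfOf f x) * (w x * f x ^ 2)) ∧
      IntegrableOn (fun u => φ u * (w (qf (cdfOf f) u) * f (qf (cdfOf f) u))) (Ioo (0:ℝ) 1) := by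
  set F := cdfOf f with hFdef
  have hf0 : ∀ x, 0 ≤ f x := by
    intro x
    by_cases hx : x ∈ Sf
    · exact (hfpos x hx).le
    · exact le_of_eq (hfzero x hx).symm
  have hfindf : f = Sf.indicator f := by
    ext x
    by_cases hx : x ∈ Sf
    · simp [hx]
    · simp [hx, hfzero x hx]
  have hfind : ∀ s : Set ℝ, (∫ x in s, f x) = ∫ x in s ∩ Sf, f x := by
    intro s
    conv_lhs => rw [hfindf]
    exact setIntegral_indicator hSf.measurableSet
  have hSfInt : (∫ x in Sf, f x) = 1 := by
    rw [setIntegral_eq_integral_of_forall_compl_eq_zero hfzero, hfpdf]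
  have hFmono : Monotone F := by
    intro x y hxy
    exact setIntegral_mono_set hfint.integrableOn (Filter.Eventually.of_forall hf0)
      (HasSubset.Subset.eventuallyLE (Iic_subset_Iic.mpr hxy))
  have hFle1 : ∀ x, F x ≤ 1 := by
    intro x
    rw [← hfpdf]
    exact setIntegral_le_integral hfint (Filter.Eventually.of_forall hf0)
  have hF0 : ∀ x, 0 ≤ F x := fun x => setIntegral_nonneg measurableSet_Iic fun t _ => hf0 t
  have hFeq : F = fun x => F 0 + ∫ t in (0:ℝ)..x, f t := by
    funext x
    have h := intervalIntegral.integral_Iic_sub_Iic (f := f) (a := (0:ℝ)) (b := x)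
      hfint.integrableOn hfint.integrableOn
    simp only [hFdef, cdfOf] at h ⊢
    linarith
  have hFcont : Continuous F := by
    rw [hFeq]
    exact continuous_const.add
      (intervalIntegral.continuous_primitive (fun a b => hfint.intervalIntegrable) 0)
  have hderiv : ∀ x ∈ Sf, HasDerivAt F (f x) x := by
    intro x hx
    have h1 : HasDerivAt (fun y => ∫ t in (0:ℝ)..y, f t) (f x) x :=
      intervalIntegral.integral_hasDerivAt_right hfint.intervalIntegrable
        hfint.aestronglyMeasurable.stronglyMeasurableAtFilter
        (hfc.continuousAt (hSf.mem_nhds hx))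
    rw [hFeq]
    exact h1.const_add (F 0)
  have hstrict : StrictMonoOn F Sf := by
    intro x hx y hy hxy
    have hIcc : Icc x y ⊆ Sf := hSfconn.out hx hy
    have hpos : 0 < ∫ t in x..y, f t :=
      intervalIntegral.intervalIntegral_pos_of_pos_on hfint.intervalIntegrable
        (fun t ht => hfpos t (hIcc (Ioo_subset_Icc_self ht))) hxy
    have h := intervalIntegral.integral_Iic_sub_Iic (f := f) (a := x) (b := y)
      hfint.integrableOn hfint.integrableOn
    simp only [hFdef, cdfOf] at h ⊢
    linarith
  have hlt : ∀ x ∈ Sf, ∀ y, y < x → F y < F x := by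
    intro x hx y hyx
    obtain ⟨ε, hε, hball⟩ := Metric.isOpen_iff.mp hSf x hx
    rw [Real.ball_eq_Ioo] at hball
    by_cases hcase : x - ε < y
    · exact hstrict (hball ⟨hcase, by linarith⟩) hx hyx
    · push_neg at hcase
      have hz : x - ε / 2 ∈ Sf := hball ⟨by linarith, by linarith⟩
      exact lt_of_le_of_lt (hFmono (by linarith : y ≤ x - ε / 2)) (hstrict hz hx (by linarith))
  have hqf : ∀ x ∈ Sf, qf F (F x) = x := by
    intro x hx
    have hlb : ∀ y ∈ {y | F x ≤ F y}, x ≤ y := by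
      intro y hy
      by_contra h
      push_neg at h
      exact absurd hy (not_le.mpr (hlt x hx y h))
    rw [qf]
    exact le_antisymm (csInf_le ⟨x, hlb⟩ (le_refl (F x))) (le_csInf ⟨x, le_refl (F x)⟩ hlb)
  have himg : F '' Sf = Ioo 0 1 := by
    apply Subset.antisymm
    · rintro _ ⟨x, hx, rfl⟩
      obtain ⟨ε, hε, hball⟩ := Metric.isOpen_iff.mp hSf x hx
      rw [Real.ball_eq_Ioo] at hball
      constructor
      · have hz : x - ε / 2 ∈ Sf := hball ⟨by linarith, by linarith⟩
        exact lt_of_le_of_lt (hF0 _) (hstrict hz hx (by linarith))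
      · have hz : x + ε / 2 ∈ Sf := hball ⟨by linarith, by linarith⟩
        exact lt_of_lt_of_le (hstrict hx hz (by linarith)) (hFle1 _)
    · rintro u ⟨hu0, hu1⟩
      have hTop : Filter.Tendsto (fun n : ℕ => F (n : ℝ)) Filter.atTop (nhds 1) := by
        have hUnion : (⋃ n : ℕ, Iic ((n : ℕ) : ℝ)) = univ := by
          ext t
          simp only [mem_iUnion, mem_Iic, mem_univ, iff_true]
          exact exists_nat_ge t
        have h := tendsto_setIntegral_of_monotone (μ := volume) (f := f)
          (s := fun n : ℕ => Iic ((n : ℕ) : ℝ)) (fun n => measurableSet_Iic)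
          (fun m n hmn => Iic_subset_Iic.mpr (by exact_mod_cast hmn))
          (by rw [hUnion]; exact hfint.integrableOn)
        rw [hUnion] at h
        simpa [hFdef, cdfOf, hfpdf, Measure.restrict_univ] using h
      have hBot : Filter.Tendsto (fun n : ℕ => F (-(n : ℝ))) Filter.atTop (nhds 0) := by
        have hInter : (⋂ n : ℕ, Iic (-((n : ℕ) : ℝ))) = ∅ := by
          ext t
          simp only [mem_iInter, mem_Iic, mem_empty_iff_false, iff_false]
          push_neg
          obtain ⟨n, hn⟩ := exists_nat_gt (-t)
          exact ⟨n, by linarith⟩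
        have h := tendsto_setIntegral_of_antitone (μ := volume) (f := f)
          (s := fun n : ℕ => Iic (-((n : ℕ) : ℝ))) (fun n => measurableSet_Iic)
          (fun m n hmn => Iic_subset_Iic.mpr (by
            have : ((m : ℕ) : ℝ) ≤ n := by exact_mod_cast hmn
            linarith)) ⟨0, hfint.integrableOn⟩
        rw [hInter] at h
        simpa [hFdef, cdfOf] using h
      obtain ⟨N, hN⟩ := (hTop.eventually (eventually_gt_nhds hu1)).exists
      obtain ⟨M, hM⟩ := (hBot.eventually (eventually_lt_nhds hu0)).exists
      have hMN : -((M : ℕ) : ℝ) ≤ ((N : ℕ) : ℝ) := by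
        have h1 : (0:ℝ) ≤ M := Nat.cast_nonneg M
        have h2 : (0:ℝ) ≤ N := Nat.cast_nonneg N
        linarith
      obtain ⟨x, hxmem, hFx⟩ := intermediate_value_Icc hMN hFcont.continuousOn ⟨hM.le, hN.le⟩
      refine ⟨x, ?_, hFx⟩
      by_contra hxS
      by_cases hl : ∃ a ∈ Sf, a < x
      · by_cases hr : ∃ b ∈ Sf, x < b
        · obtain ⟨a, ha, hax⟩ := hl
          obtain ⟨b, hb, hxb⟩ := hr
          exact hxS (hSfconn.out ha hb ⟨hax.le, hxb.le⟩)
        · push_neg at hr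
          have h1 : F x = 1 := by
            have hsub : Iic x ∩ Sf = Sf := inter_eq_right.mpr fun b hb => hr b hb
            rw [hFdef] at *
            show (∫ t in Iic x, f t) = 1
            rw [hfind, hsub, hSfInt]
          rw [hFx] at h1
          exact absurd h1 (ne_of_lt hu1)
      · push_neg at hl
        have h0 : F x = 0 := by
          have hsub : Iic x ∩ Sf = ∅ := by
            ext t
            simp only [mem_inter_iff, mem_Iic, mem_empty_iff_false, iff_false, not_and]
            intro htx htS
            have := hl t htS
            have : t = x := le_antisymm htx this
            exact hxS (this ▸ htS)
          show (∫ t in Iic x, f t) = 0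
          rw [hfind, hsub]
          simp
        rw [hFx] at h0
        linarith
  have hinj : InjOn F Sf := hstrict.injOn
  have hderiv' : ∀ x ∈ Sf, HasDerivWithinAt F (f x) Sf x :=
    fun x hx => (hderiv x hx).hasDerivWithinAt
  have key := integral_image_eq_integral_abs_deriv_smul hSf.measurableSet hderiv' hinj
    (fun u => φ u * (w (qf F u) * f (qf F u)))
  rw [himg] at key
  have hEq : EqOn (fun x => φ (F x) * (w x * f x ^ 2))
      (fun x => |f x| • ((fun u => φ u * (w (qf F u) * f (qf F u))) (F x))) Sf := by
    intro x hx
    simp only [hqf x hx, smul_eq_mul, abs_of_nonneg (hf0 x)]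
    ring
  have hSide : (∫ x in Sf, |f x| • ((fun u => φ u * (w (qf F u) * f (qf F u))) (F x))) =
      ∫ x in Sf, φ (F x) * (w x * f x ^ 2) :=
    (setIntegral_congr_fun hSf.measurableSet hEq).symm
  have hExt : (∫ x in Sf, φ (F x) * (w x * f x ^ 2)) = ∫ x, φ (F x) * (w x * f x ^ 2) :=
    setIntegral_eq_integral_of_forall_compl_eq_zero fun x hx => by rw [hfzero x hx]; ring
  obtain ⟨C, hC⟩ := isCompact_Icc.exists_bound_of_continuousOn (s := Icc (0:ℝ) 1) hφ.continuousOn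
  have hglob : Integrable (fun x => φ (F x) * (w x * f x ^ 2)) := by
    refine Integrable.mono' (hint.const_mul C)
      (((hφ.comp hFcont).aestronglyMeasurable).mul hint.aestronglyMeasurable)
      (Filter.Eventually.of_forall fun x => ?_)
    have h1 : 0 ≤ w x * f x ^ 2 := mul_nonneg (hwnn x) (sq_nonneg _)
    have h2 := hC (F x) ⟨hF0 x, hFle1 x⟩
    calc ‖φ (F x) * (w x * f x ^ 2)‖ = ‖φ (F x)‖ * (w x * f x ^ 2) := by
          rw [norm_mul, Real.norm_of_nonneg h1]
      _ ≤ C * (w x * f x ^ 2) := mul_le_mul_of_nonneg_right h2 h1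
  refine ⟨key.trans (hSide.trans hExt), ?_⟩
  have hOn : IntegrableOn
      (fun x => |f x| • ((fun u => φ u * (w (qf F u) * f (qf F u))) (F x))) Sf :=
    IntegrableOn.congr_fun hglob.integrableOn hEq hSf.measurableSet
  have h := (integrableOn_image_iff_integrableOn_abs_deriv_smul hSf.measurableSet hderiv' hinj
    (fun u => φ u * (w (qf F u) * f (qf F u)))).mpr hOn
  rwa [himg] at h



noncomputable def Kin (i n : ℕ) : ℝ :=
  ((Nat.factorial n : ℝ) / ((Nat.factorial (i - 1) : ℝ) * (Nat.factorial (n - i) : ℝ))) ^ 2 *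
    (((Nat.factorial (2 * i - 2) : ℝ) * (Nat.factorial (2 * n - 2 * i) : ℝ)) /
      (Nat.factorial (2 * n - 1) : ℝ))

lemma Kin_pos (i n : ℕ) (hi1 : 1 ≤ i) (hin : i ≤ n) : 0 < Kin i n := by
  have h1 : (0:ℝ) < (Nat.factorial n : ℝ) := by exact_mod_cast Nat.factorial_pos n
  have h2 : (0:ℝ) < (Nat.factorial (i - 1) : ℝ) := by exact_mod_cast Nat.factorial_pos _
  have h3 : (0:ℝ) < (Nat.factorial (n - i) : ℝ) := by exact_mod_cast Nat.factorial_pos _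
  have h4 : (0:ℝ) < (Nat.factorial (2 * i - 2) : ℝ) := by exact_mod_cast Nat.factorial_pos _
  have h5 : (0:ℝ) < (Nat.factorial (2 * n - 2 * i) : ℝ) := by exact_mod_cast Nat.factorial_pos _
  have h6 : (0:ℝ) < (Nat.factorial (2 * n - 1) : ℝ) := by exact_mod_cast Nat.factorial_pos _
  unfold Kin
  positivity

lemma betaPdf_continuous (i n : ℕ) : Continuous (betaPdf i n) := by
  unfold betaPdf
  fun_prop

lemma betaPdf_nonneg (i n : ℕ) {u : ℝ} (h0 : 0 ≤ u) (h1 : u ≤ 1) : 0 ≤ betaPdf i n u := by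
  unfold betaPdf
  have h4 : (0:ℝ) ≤ (Nat.factorial (2 * i - 2) : ℝ) := by positivity
  have := Nat.factorial_pos (2 * i - 2)
  apply mul_nonneg (mul_nonneg _ _) _
  · positivity
  · exact pow_nonneg h0 _
  · exact pow_nonneg (by linarith) _

lemma osPdf_sq (f F w : ℝ → ℝ) (i n : ℕ) (hi1 : 1 ≤ i) (hin : i ≤ n) (x : ℝ) :
    w x * osPdf f F i n x ^ 2 = Kin i n * (betaPdf i n (F x) * (w x * f x ^ 2)) := by
  simp only [osPdf, betaPdf, Kin]
  have h1 : (i - 1) * 2 = 2 * i - 2 := by omega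
  have h2 : (n - i) * 2 = 2 * n - 2 * i := by omega
  have e1 : (F x ^ (i - 1)) ^ 2 = F x ^ (2 * i - 2) := by rw [← pow_mul, h1]
  have e2 : ((1 - F x) ^ (n - i)) ^ 2 = (1 - F x) ^ (2 * n - 2 * i) := by rw [← pow_mul, h2]
  have hB : ((Nat.factorial (i - 1) : ℝ)) ≠ 0 := by
    exact_mod_cast (Nat.factorial_pos _).ne'
  have hC : ((Nat.factorial (n - i) : ℝ)) ≠ 0 := by
    exact_mod_cast (Nat.factorial_pos _).ne'
  have hG : ((Nat.factorial (2 * n - 1) : ℝ)) ≠ 0 := by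
    exact_mod_cast (Nat.factorial_pos _).ne'
  rw [mul_pow, mul_pow, mul_pow, e1, e2]
  field_simp

/-- The core comparison inequality on `(0,1)`. -/
lemma core_ineq (φ Δ Δ₁ Δ₂ : ℝ → ℝ)
    (hφc : Continuous φ) (hφnn : ∀ u ∈ Icc (0:ℝ) 1, 0 ≤ φ u)
    (h12 : ∀ u, Δ u = Δ₁ u - Δ₂ u)
    (hi1 : IntegrableOn Δ₁ (Ioo (0:ℝ) 1)) (hi2 : IntegrableOn Δ₂ (Ioo (0:ℝ) 1))
    (hp1 : IntegrableOn (fun u => φ u * Δ₁ u) (Ioo (0:ℝ) 1))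
    (hp2 : IntegrableOn (fun u => φ u * Δ₂ u) (Ioo (0:ℝ) 1))
    (hint : (∫ u in Ioo (0:ℝ) 1, Δ₂ u) ≤ ∫ u in Ioo (0:ℝ) 1, Δ₁ u)
    (hc : ∀ u₁ ∈ Icc (0:ℝ) 1, 0 < Δ u₁ → ∀ u₂ ∈ Icc (0:ℝ) 1, Δ u₂ < 0 → φ u₂ ≤ φ u₁) :
    (∫ u in Ioo (0:ℝ) 1, φ u * Δ₂ u) ≤ ∫ u in Ioo (0:ℝ) 1, φ u * Δ₁ u := by
  set A := insert (0:ℝ) (φ '' {u | u ∈ Icc (0:ℝ) 1 ∧ Δ u < 0}) with hA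
  have hbdd : BddAbove A := by
    apply BddAbove.insert
    apply BddAbove.mono _ (isCompact_Icc.bddAbove_image hφc.continuousOn
      (K := Icc (0:ℝ) 1))
    exact image_mono fun u hu => hu.1
  set m := sSup A with hm
  have hm0 : 0 ≤ m := le_csSup hbdd (mem_insert _ _)
  have hptwise : ∀ u ∈ Ioo (0:ℝ) 1, m * Δ u ≤ φ u * Δ u := by
    intro u hu
    have huI : u ∈ Icc (0:ℝ) 1 := Ioo_subset_Icc_self hu
    rcases lt_trichotomy (Δ u) 0 with hneg | hzero | hpos
    · have hφm : φ u ≤ m :=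
        le_csSup hbdd (mem_insert_of_mem _ ⟨u, ⟨huI, hneg⟩, rfl⟩)
      exact mul_le_mul_of_nonpos_right hφm hneg.le
    · rw [hzero]; simp
    · have hmφ : m ≤ φ u := by
        apply csSup_le ⟨0, mem_insert _ _⟩
        rintro v (rfl | ⟨u₂, ⟨hu₂, hneg⟩, rfl⟩)
        · exact hφnn u huI
        · exact hc u huI hpos u₂ hu₂ hneg
      exact mul_le_mul_of_nonneg_right hmφ hpos.le
  have hΔint : IntegrableOn Δ (Ioo (0:ℝ) 1) :=
    (hi1.sub hi2).congr (Filter.Eventually.of_forall fun u => by simp [h12 u])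
  have hφΔint : IntegrableOn (fun u => φ u * Δ u) (Ioo (0:ℝ) 1) :=
    (hp1.sub hp2).congr
      (Filter.Eventually.of_forall fun u => by simp [h12 u]; ring)
  have hmono : (∫ u in Ioo (0:ℝ) 1, m * Δ u) ≤ ∫ u in Ioo (0:ℝ) 1, φ u * Δ u :=
    setIntegral_mono_on (hΔint.const_mul m) hφΔint measurableSet_Ioo hptwise
  have hsplit : (∫ u in Ioo (0:ℝ) 1, φ u * Δ u) =
      (∫ u in Ioo (0:ℝ) 1, φ u * Δ₁ u) - ∫ u in Ioo (0:ℝ) 1, φ u * Δ₂ u := by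
    rw [← integral_sub hp1 hp2]
    apply setIntegral_congr_fun measurableSet_Ioo
    intro u _
    simp [h12 u]
    ring
  have hmint : (∫ u in Ioo (0:ℝ) 1, m * Δ u) =
      m * ((∫ u in Ioo (0:ℝ) 1, Δ₁ u) - ∫ u in Ioo (0:ℝ) 1, Δ₂ u) := by
    rw [integral_const_mul, ← integral_sub hi1 hi2]
    congr 1
    apply setIntegral_congr_fun measurableSet_Ioo
    intro u _
    exact h12 u
  have h0 : 0 ≤ m * ((∫ u in Ioo (0:ℝ) 1, Δ₁ u) - ∫ u in Ioo (0:ℝ) 1, Δ₂ u) :=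
    mul_nonneg hm0 (by linarith)
  linarith [hmono, hsplit ▸ hmono]

/-- if the Beta pdf `φ_{2i-1:2n-1}` is at least as large on the set where
`Δ > 0` as on the set where `Δ < 0` (for each rank used in the PRSS scheme), then
`J^{w₁}(X) ≤ J^{w₂}(Y)` implies `J^{w₁}(X_PRSS) ≤ J^{w₂}(Y_PRSS)`. -/
theorem Jprss_le_of_gwe_le
    (f g w₁ w₂ Δ : ℝ → ℝ) (Sf Sg : Set ℝ) (n a b : ℕ)
    (hSf : IsOpen Sf) (hSfconn : Sf.OrdConnected) (hSfnn : Sf ⊆ Ici (0:ℝ))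
    (hSg : IsOpen Sg) (hSgconn : Sg.OrdConnected) (hSgnn : Sg ⊆ Ici (0:ℝ))
    (hfc : ContinuousOn f Sf) (hfpos : ∀ x ∈ Sf, 0 < f x) (hfzero : ∀ x ∉ Sf, f x = 0)
    (hfint : Integrable f) (hfpdf : ∫ x, f x = 1)
    (hgc : ContinuousOn g Sg) (hgpos : ∀ x ∈ Sg, 0 < g x) (hgzero : ∀ x ∉ Sg, g x = 0)
    (hgint : Integrable g) (hgpdf : ∫ x, g x = 1)
    (hw₁nn : ∀ x, 0 ≤ w₁ x) (hw₂nn : ∀ x, 0 ≤ w₂ x)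
    (hint₁ : Integrable (fun x => w₁ x * f x ^ 2))
    (hint₂ : Integrable (fun x => w₂ x * g x ^ 2))
    (hn : 1 ≤ n) (ha1 : 1 ≤ a) (han : a ≤ n) (hb1 : 1 ≤ b) (hbn : b ≤ n)
    (hΔ : ∀ u, Δ u =
      w₁ (qf (cdfOf f) u) * f (qf (cdfOf f) u) -
        w₂ (qf (cdfOf g) u) * g (qf (cdfOf g) u))
    (hcond : ∀ i : ℕ, (i = a ∨ i = b ∨ (¬ Even n ∧ i = (n + 1) / 2)) →
      ∀ u₁ ∈ Icc (0:ℝ) 1, 0 < Δ u₁ →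
        ∀ u₂ ∈ Icc (0:ℝ) 1, Δ u₂ < 0 →
          betaPdf i n u₂ ≤ betaPdf i n u₁)
    (hJ : -(1 / 2) * (∫ x, w₁ x * f x ^ 2) ≤ -(1 / 2) * (∫ x, w₂ x * g x ^ 2)) :
    Jprss w₁ f (cdfOf f) n a b ≤ Jprss w₂ g (cdfOf g) n a b := by
  have hJ' : (∫ x, w₂ x * g x ^ 2) ≤ ∫ x, w₁ x * f x ^ 2 := by linarith
  have key : ∀ i : ℕ, 1 ≤ i → i ≤ n →
      (i = a ∨ i = b ∨ (¬ Even n ∧ i = (n + 1) / 2)) →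
      0 ≤ (∫ x, w₂ x * osPdf g (cdfOf g) i n x ^ 2) ∧
        (∫ x, w₂ x * osPdf g (cdfOf g) i n x ^ 2) ≤
          ∫ x, w₁ x * osPdf f (cdfOf f) i n x ^ 2 := by
    intro i hi1 hin hdisj
    have hnn : 0 ≤ ∫ x, w₂ x * osPdf g (cdfOf g) i n x ^ 2 :=
      integral_nonneg fun x => mul_nonneg (hw₂nn x) (sq_nonneg _)
    refine ⟨hnn, ?_⟩
    obtain ⟨e₁, int₁⟩ := cdf_subst f w₁ (betaPdf i n) Sf hSf hSfconn hfc hfpos hfzero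
      hfint hfpdf hw₁nn hint₁ (betaPdf_continuous i n)
    obtain ⟨e₂, int₂⟩ := cdf_subst g w₂ (betaPdf i n) Sg hSg hSgconn hgc hgpos hgzero
      hgint hgpdf hw₂nn hint₂ (betaPdf_continuous i n)
    obtain ⟨e₁', int₁'⟩ := cdf_subst f w₁ (fun _ => 1) Sf hSf hSfconn hfc hfpos hfzero
      hfint hfpdf hw₁nn hint₁ continuous_const
    obtain ⟨e₂', int₂'⟩ := cdf_subst g w₂ (fun _ => 1) Sg hSg hSgconn hgc hgpos hgzero
      hgint hgpdf hw₂nn hint₂ continuous_const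
    simp only [one_mul] at e₁' e₂' int₁' int₂'
    have hcore := core_ineq (betaPdf i n) Δ
        (fun u => w₁ (qf (cdfOf f) u) * f (qf (cdfOf f) u))
        (fun u => w₂ (qf (cdfOf g) u) * g (qf (cdfOf g) u))
        (betaPdf_continuous i n) (fun u hu => betaPdf_nonneg i n hu.1 hu.2)
        hΔ int₁' int₂' int₁ int₂
        (by rw [e₁', e₂']; exact hJ')
        (fun u₁ h₁ hp u₂ h₂ hneg => hcond i hdisj u₁ h₁ hp u₂ h₂ hneg)
    have step : Kin i n * (∫ u in Ioo (0:ℝ) 1,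
          betaPdf i n u * (w₂ (qf (cdfOf g) u) * g (qf (cdfOf g) u))) ≤
        Kin i n * ∫ u in Ioo (0:ℝ) 1,
          betaPdf i n u * (w₁ (qf (cdfOf f) u) * f (qf (cdfOf f) u)) :=
      mul_le_mul_of_nonneg_left hcore (Kin_pos i n hi1 hin).le
    calc (∫ x, w₂ x * osPdf g (cdfOf g) i n x ^ 2)
        = Kin i n * ∫ x, betaPdf i n (cdfOf g x) * (w₂ x * g x ^ 2) := by
          simp_rw [osPdf_sq g (cdfOf g) w₂ i n hi1 hin]
          rw [integral_const_mul]
      _ = Kin i n * ∫ u in Ioo (0:ℝ) 1,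
            betaPdf i n u * (w₂ (qf (cdfOf g) u) * g (qf (cdfOf g) u)) := by rw [e₂]
      _ ≤ Kin i n * ∫ u in Ioo (0:ℝ) 1,
            betaPdf i n u * (w₁ (qf (cdfOf f) u) * f (qf (cdfOf f) u)) := step
      _ = Kin i n * ∫ x, betaPdf i n (cdfOf f x) * (w₁ x * f x ^ 2) := by rw [e₁]
      _ = ∫ x, w₁ x * osPdf f (cdfOf f) i n x ^ 2 := by
          simp_rw [osPdf_sq f (cdfOf f) w₁ i n hi1 hin]
          rw [integral_const_mul]
  by_cases hE : Even n
  · obtain ⟨hA0, hA⟩ := key a ha1 han (Or.inl rfl)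
    obtain ⟨hB0, hB⟩ := key b hb1 hbn (Or.inr (Or.inl rfl))
    rw [Jprss, Jprss, if_pos hE, if_pos hE]
    set k := n / 2
    have p1 : (∫ x, w₂ x * osPdf g (cdfOf g) a n x ^ 2) ^ k ≤
        (∫ x, w₁ x * osPdf f (cdfOf f) a n x ^ 2) ^ k := pow_le_pow_left₀ hA0 hA k
    have p2 : (∫ x, w₂ x * osPdf g (cdfOf g) b n x ^ 2) ^ k ≤
        (∫ x, w₁ x * osPdf f (cdfOf f) b n x ^ 2) ^ k := pow_le_pow_left₀ hB0 hB k
    have q := mul_le_mul p1 p2 (pow_nonneg hB0 k) (pow_nonneg (hA0.trans hA) k)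
    nlinarith [q]
  · obtain ⟨hA0, hA⟩ := key a ha1 han (Or.inl rfl)
    obtain ⟨hB0, hB⟩ := key b hb1 hbn (Or.inr (Or.inl rfl))
    obtain ⟨hC0, hC⟩ := key ((n + 1) / 2) (by omega) (by omega) (Or.inr (Or.inr ⟨hE, rfl⟩))
    rw [Jprss, Jprss, if_neg hE, if_neg hE]
    set k := (n - 1) / 2
    have p1 : (∫ x, w₂ x * osPdf g (cdfOf g) a n x ^ 2) ^ k ≤
        (∫ x, w₁ x * osPdf f (cdfOf f) a n x ^ 2) ^ k := pow_le_pow_left₀ hA0 hA k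
    have p2 : (∫ x, w₂ x * osPdf g (cdfOf g) b n x ^ 2) ^ k ≤
        (∫ x, w₁ x * osPdf f (cdfOf f) b n x ^ 2) ^ k := pow_le_pow_left₀ hB0 hB k
    have q12 := mul_le_mul p1 p2 (pow_nonneg hB0 k) (pow_nonneg (hA0.trans hA) k)
    have q := mul_le_mul q12 hC hC0
      (mul_nonneg (pow_nonneg (hA0.trans hA) k) (pow_nonneg (hB0.trans hB) k))
    nlinarith [q]
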